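/- For all real parameters z, z', the skew-symmetric bivector π on ℝ⁴ (coordinates s⁰,s¹,s²,s³) with components π^{01} = z(s⁰+s¹)s², π^{02} = −z[(s⁰+s¹)s¹ + (s³)²] − z'(s⁰+s¹)s³, π^{03} = z s²s³ + z'(s⁰+s¹)s², π^{12} = −z[(s⁰+s¹)s⁰ − (s³)²] + z'(s⁰+s¹)s³, π^{13} = −z s²s³ − z'(s⁰+s¹)s², π^{23} = z(s⁰+s¹)s³ + z'(s⁰+s¹)², and π^{νμ} = −π^{μν}, satisfies the Jacobi identity: for all μ,ν,ρ ∈ {0,1,2,3} and all s ∈ ℝ⁴, Σ_{σ=0}^{3} ( π^{μσ}(s) ∂π^{νρ}/∂s^σ (s) + π^{νσ}(s) ∂π^{ρμ}/∂s^σ (s) + π^{ρσ}(s) ∂π^{μν}/∂s^σ (s) ) = 0. Hence π defines a Poisson bracket on ℝ⁴ (the Type I (A)dS/Minkowski Poisson homogeneous spacetime in ambient coordinates). -/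

import Mathlib

namespace NCSTPoisson

noncomputable section

/-- The ambient spacetime coordinates `(s⁰,s¹,s²,s³)`. -/
abbrev S : Type := Fin 4 → ℝ

/-- The partial derivative `∂f/∂s^σ` at `s`. -/
def pd (σ : Fin 4) (f : S → ℝ) (s : S) : ℝ := fderiv ℝ f s (Pi.single σ 1)

/-- The Type I Poisson bivector on `ℝ⁴` in ambient coordinates:
`π^{01} = z(s⁰+s¹)s²`, `π^{02} = −z[(s⁰+s¹)s¹ + (s³)²] − z'(s⁰+s¹)s³`,
`π^{03} = z s²s³ + z'(s⁰+s¹)s²`, `π^{12} = −z[(s⁰+s¹)s⁰ − (s³)²] + z'(s⁰+s¹)s³`,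
`π^{13} = −z s²s³ − z'(s⁰+s¹)s²`, `π^{23} = z(s⁰+s¹)s³ + z'(s⁰+s¹)²`,
`π^{νμ} = −π^{μν}`. -/
def piI (z z' : ℝ) (s : S) : Fin 4 → Fin 4 → ℝ :=
  ![![0, z * (s 0 + s 1) * s 2,
      -(z * ((s 0 + s 1) * s 1 + (s 3) ^ 2)) - z' * (s 0 + s 1) * s 3,
      z * s 2 * s 3 + z' * (s 0 + s 1) * s 2],
    ![-(z * (s 0 + s 1) * s 2), 0,
      -(z * ((s 0 + s 1) * s 0 - (s 3) ^ 2)) + z' * (s 0 + s 1) * s 3,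
      -(z * s 2 * s 3) - z' * (s 0 + s 1) * s 2],
    ![-(-(z * ((s 0 + s 1) * s 1 + (s 3) ^ 2)) - z' * (s 0 + s 1) * s 3),
      -(-(z * ((s 0 + s 1) * s 0 - (s 3) ^ 2)) + z' * (s 0 + s 1) * s 3), 0,
      z * (s 0 + s 1) * s 3 + z' * (s 0 + s 1) ^ 2],
    ![-(z * s 2 * s 3 + z' * (s 0 + s 1) * s 2),
      -(-(z * s 2 * s 3) - z' * (s 0 + s 1) * s 2),
      -(z * (s 0 + s 1) * s 3 + z' * (s 0 + s 1) ^ 2), 0]]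

/-- The Type II Poisson bivector on `ℝ⁴`:
`π^{02} = z s¹s³`, `π^{03} = −z s¹s²`, `π^{12} = z s⁰s³`, `π^{13} = −z s⁰s²`,
`π^{01} = π^{23} = 0`, `π^{νμ} = −π^{μν}`. -/
def piII (z : ℝ) (s : S) : Fin 4 → Fin 4 → ℝ :=
  ![![0, 0, z * s 1 * s 3, -(z * s 1 * s 2)],
    ![0, 0, z * s 0 * s 3, -(z * s 0 * s 2)],
    ![-(z * s 1 * s 3), -(z * s 0 * s 3), 0, 0],
    ![z * s 1 * s 2, z * s 0 * s 2, 0, 0]]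

/-- The Type III Poisson bivector on `ℝ⁴`:
`π^{01} = z(s⁰+s¹)s²`, `π^{02} = −z(s⁰+s¹)s¹`, `π^{12} = −z(s⁰+s¹)s⁰`,
`π^{03} = π^{13} = π^{23} = 0`, `π^{νμ} = −π^{μν}`. -/
def piIII (z : ℝ) (s : S) : Fin 4 → Fin 4 → ℝ :=
  ![![0, z * (s 0 + s 1) * s 2, -(z * (s 0 + s 1) * s 1), 0],
    ![-(z * (s 0 + s 1) * s 2), 0, -(z * (s 0 + s 1) * s 0), 0],
    ![z * (s 0 + s 1) * s 1, z * (s 0 + s 1) * s 0, 0, 0],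
    ![0, 0, 0, 0]]

/-- The Jacobiator `Σ_σ (π^{μσ}∂_σ π^{νρ} + π^{νσ}∂_σ π^{ρμ} + π^{ρσ}∂_σ π^{μν})`
of a bivector field `π` on `ℝ⁴`. -/
def jacobiator (π : S → Fin 4 → Fin 4 → ℝ) (μ ν ρ : Fin 4) (s : S) : ℝ :=
  ∑ σ : Fin 4,
    (π s μ σ * pd σ (fun t => π t ν ρ) s
     + π s ν σ * pd σ (fun t => π t ρ μ) s
     + π s ρ σ * pd σ (fun t => π t μ ν) s)


section Aux

lemma fderiv_coord (i : Fin 4) (s : S) :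
    fderiv ℝ (fun t : S => t i) s = ContinuousLinearMap.proj i :=
  (ContinuousLinearMap.proj (R := ℝ) (φ := fun _ : Fin 4 => ℝ) i).fderiv

lemma pd_neg (σ : Fin 4) (f : S → ℝ) (s : S) : pd σ (fun t => -(f t)) s = -(pd σ f s) := by
  simp [pd, fderiv_neg]

lemma pd_zero (σ : Fin 4) (s : S) : pd σ (fun _ : S => (0:ℝ)) s = 0 := by
  simp [pd]

variable (z z' : ℝ) (σ : Fin 4) (s : S)

lemma pd01 : pd σ (fun t => z * (t 0 + t 1) * t 2) s
    = z * ((Pi.single σ 1 : S) 0 + (Pi.single σ 1 : S) 1) * s 2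
      + z * (s 0 + s 1) * (Pi.single σ 1 : S) 2 := by
  simp only [pd, pow_two]
  simp (disch := fun_prop) only [fderiv_fun_mul, fderiv_fun_add, fderiv_fun_sub, fderiv_fun_neg, fderiv_coord,
    fderiv_fun_const, Pi.zero_apply, ContinuousLinearMap.zero_apply,
    ContinuousLinearMap.add_apply, ContinuousLinearMap.smul_apply, ContinuousLinearMap.proj_apply,
    ContinuousLinearMap.neg_apply, ContinuousLinearMap.sub_apply,
    ContinuousLinearMap.coe_smul', Pi.smul_apply, smul_eq_mul]
  ring
lemma pd02 : pd σ (fun t => -(z * ((t 0 + t 1) * t 1 + (t 3) ^ 2)) - z' * (t 0 + t 1) * t 3) s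
    = -(z * (((Pi.single σ 1 : S) 0 + (Pi.single σ 1 : S) 1) * s 1
        + (s 0 + s 1) * (Pi.single σ 1 : S) 1 + 2 * s 3 * (Pi.single σ 1 : S) 3))
      - z' * (((Pi.single σ 1 : S) 0 + (Pi.single σ 1 : S) 1) * s 3
        + (s 0 + s 1) * (Pi.single σ 1 : S) 3) := by
  simp only [pd, pow_two]
  simp (disch := fun_prop) only [fderiv_fun_mul, fderiv_fun_add, fderiv_fun_sub, fderiv_fun_neg, fderiv_coord,
    fderiv_fun_const, Pi.zero_apply, ContinuousLinearMap.zero_apply,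
    ContinuousLinearMap.add_apply, ContinuousLinearMap.smul_apply, ContinuousLinearMap.proj_apply,
    ContinuousLinearMap.neg_apply, ContinuousLinearMap.sub_apply,
    ContinuousLinearMap.coe_smul', Pi.smul_apply, smul_eq_mul]
  ring
lemma pd03 : pd σ (fun t => z * t 2 * t 3 + z' * (t 0 + t 1) * t 2) s
    = z * ((Pi.single σ 1 : S) 2 * s 3 + s 2 * (Pi.single σ 1 : S) 3)
      + z' * (((Pi.single σ 1 : S) 0 + (Pi.single σ 1 : S) 1) * s 2
        + (s 0 + s 1) * (Pi.single σ 1 : S) 2) := by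
  simp only [pd, pow_two]
  simp (disch := fun_prop) only [fderiv_fun_mul, fderiv_fun_add, fderiv_fun_sub, fderiv_fun_neg, fderiv_coord,
    fderiv_fun_const, Pi.zero_apply, ContinuousLinearMap.zero_apply,
    ContinuousLinearMap.add_apply, ContinuousLinearMap.smul_apply, ContinuousLinearMap.proj_apply,
    ContinuousLinearMap.neg_apply, ContinuousLinearMap.sub_apply,
    ContinuousLinearMap.coe_smul', Pi.smul_apply, smul_eq_mul]
  ring
lemma pd12 : pd σ (fun t => -(z * ((t 0 + t 1) * t 0 - (t 3) ^ 2)) + z' * (t 0 + t 1) * t 3) s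
    = -(z * (((Pi.single σ 1 : S) 0 + (Pi.single σ 1 : S) 1) * s 0
        + (s 0 + s 1) * (Pi.single σ 1 : S) 0 - 2 * s 3 * (Pi.single σ 1 : S) 3))
      + z' * (((Pi.single σ 1 : S) 0 + (Pi.single σ 1 : S) 1) * s 3
        + (s 0 + s 1) * (Pi.single σ 1 : S) 3) := by
  simp only [pd, pow_two]
  simp (disch := fun_prop) only [fderiv_fun_mul, fderiv_fun_add, fderiv_fun_sub, fderiv_fun_neg, fderiv_coord,
    fderiv_fun_const, Pi.zero_apply, ContinuousLinearMap.zero_apply,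
    ContinuousLinearMap.add_apply, ContinuousLinearMap.smul_apply, ContinuousLinearMap.proj_apply,
    ContinuousLinearMap.neg_apply, ContinuousLinearMap.sub_apply,
    ContinuousLinearMap.coe_smul', Pi.smul_apply, smul_eq_mul]
  ring
lemma pd13 : pd σ (fun t => -(z * t 2 * t 3) - z' * (t 0 + t 1) * t 2) s
    = -(z * ((Pi.single σ 1 : S) 2 * s 3 + s 2 * (Pi.single σ 1 : S) 3))
      - z' * (((Pi.single σ 1 : S) 0 + (Pi.single σ 1 : S) 1) * s 2
        + (s 0 + s 1) * (Pi.single σ 1 : S) 2) := by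
  simp only [pd, pow_two]
  simp (disch := fun_prop) only [fderiv_fun_mul, fderiv_fun_add, fderiv_fun_sub, fderiv_fun_neg, fderiv_coord,
    fderiv_fun_const, Pi.zero_apply, ContinuousLinearMap.zero_apply,
    ContinuousLinearMap.add_apply, ContinuousLinearMap.smul_apply, ContinuousLinearMap.proj_apply,
    ContinuousLinearMap.neg_apply, ContinuousLinearMap.sub_apply,
    ContinuousLinearMap.coe_smul', Pi.smul_apply, smul_eq_mul]
  ring
lemma pd23 : pd σ (fun t => z * (t 0 + t 1) * t 3 + z' * (t 0 + t 1) ^ 2) s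
    = z * (((Pi.single σ 1 : S) 0 + (Pi.single σ 1 : S) 1) * s 3
        + (s 0 + s 1) * (Pi.single σ 1 : S) 3)
      + z' * 2 * (s 0 + s 1) * ((Pi.single σ 1 : S) 0 + (Pi.single σ 1 : S) 1) := by
  simp only [pd, pow_two]
  simp (disch := fun_prop) only [fderiv_fun_mul, fderiv_fun_add, fderiv_fun_sub, fderiv_fun_neg, fderiv_coord,
    fderiv_fun_const, Pi.zero_apply, ContinuousLinearMap.zero_apply,
    ContinuousLinearMap.add_apply, ContinuousLinearMap.smul_apply, ContinuousLinearMap.proj_apply,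
    ContinuousLinearMap.neg_apply, ContinuousLinearMap.sub_apply,
    ContinuousLinearMap.coe_smul', Pi.smul_apply, smul_eq_mul]
  ring
end Aux

set_option maxHeartbeats 4000000 in
/-- The Type I bivector `π_I` is skew-symmetric and satisfies the
Jacobi identity, hence defines a Poisson bracket on `ℝ⁴` (the Type I (A)dS/Minkowski
Poisson homogeneous spacetime in ambient coordinates). -/
theorem piI_skew_and_jacobi (z z' : ℝ) :
    (∀ (s : S) (μ ν : Fin 4), piI z z' s ν μ = -piI z z' s μ ν) ∧
    (∀ (μ ν ρ : Fin 4) (s : S), jacobiator (piI z z') μ ν ρ s = 0) := by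
  constructor
  · intro s μ ν
    fin_cases μ <;> fin_cases ν <;>
      simp [piI] <;> ring
  · intro μ ν ρ s
    fin_cases μ <;> fin_cases ν <;> fin_cases ρ <;>
      (simp only [Fin.mk_zero, Fin.mk_one, Fin.reduceFinMk]
       simp only [jacobiator, Fin.sum_univ_four, piI, Matrix.cons_val_zero, Matrix.cons_val_one,
        Matrix.head_cons, Matrix.cons_val_two, Matrix.tail_cons, Matrix.cons_val_three,
        Matrix.head_fin_const, Fin.isValue, pd_neg, pd_zero, pd01, pd02, pd03, pd12, pd13, pd23]
       simp [Pi.single_apply]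
       try ring)

end
end NCSTPoisson
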